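/- arXiv:1003.2440 — 2 statements merged into one kernel-verified Lean document; each statement's English description precedes it below -/
import Mathlib

section
/- For every m×n real matrix B there exists a saddle point in mixed strategies: there exist y* ∈ Δ_m and z* ∈ Δ_n such that for all y ∈ Δ_m and all z ∈ Δ_n, Σ_{i,j} y_i B_{ij} z*_j ≤ Σ_{i,j} y*_i B_{ij} z*_j ≤ Σ_{i,j} y*_i B_{ij} z_j. -/
/-!
Let `y*` maximise over the simplex player 1's security level `min_j (y B)_j`, and call its value
`v`. If no mixed strategy `z` had `B z ≤ v` coordinatewise, the compact convex set
`{B z : z ∈ Δ_n}` would miss the closed orthant `{x : x ≤ v}`. A hyperplane separating them has a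
nonnegative normal, since the orthant is unbounded below, and normalised to a probability vector
`y` it gives `min_j (y B)_j > v`, contradicting maximality. So some `z*` has `B z* ≤ v`, and then
`y B z* ≤ v ≤ y* B z` for all mixed strategies `y` and `z`.
-/

open scoped BigOperators

/-- Expected payoff to player 1 in the matrix game `B` when player 1 uses the
mixed strategy `y` and player 2 uses the mixed strategy `z`. -/
noncomputable def expectedPayoff {m n : ℕ} (B : Matrix (Fin m) (Fin n) ℝ)
    (y : Fin m → ℝ) (z : Fin n → ℝ) : ℝ :=
  ∑ i, ∑ j, y i * B i j * z j

open Matrix Finset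

section

variable {ι κ : Type*}

theorem LinearMap.apply_single_one_nonneg_of_bddAbove_image_Iic [DecidableEq ι]
    (f : (ι → ℝ) →ₗ[ℝ] ℝ) {a : ι → ℝ} (hf : BddAbove (f '' Set.Iic a)) (i : ι) :
    0 ≤ f (Pi.single i 1) := by
  obtain ⟨u, hu⟩ := hf
  have hfa : f a ≤ u := hu ⟨a, Set.mem_Iic.2 le_rfl, rfl⟩
  by_contra! hneg
  -- chosen so that `f (a - t • Pi.single i 1) = u + 1`
  set t := (u - f a + 1) / -f (Pi.single i 1)
  have ht : 0 ≤ t := div_nonneg (by linarith) (by linarith)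
  have hle : f (a - t • Pi.single i 1) ≤ u :=
    hu ⟨_, sub_le_self _ (smul_nonneg ht (Pi.single_nonneg.2 zero_le_one : (0 : ι → ℝ) ≤ _)), rfl⟩
  have htp : t * f (Pi.single i 1) = -(u - f a + 1) := by
    simp only [t]
    field_simp [hneg.ne]
  rw [map_sub, map_smul, smul_eq_mul, htp] at hle
  linarith

variable [Fintype ι] [Fintype κ]

theorem LinearMap.apply_eq_dotProduct_single_one [DecidableEq ι] (f : (ι → ℝ) →ₗ[ℝ] ℝ)
    (x : ι → ℝ) : f x = (fun i => f (Pi.single i 1)) ⬝ᵥ x := by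
  conv_lhs => rw [pi_eq_sum_univ' x]
  simp [map_sum, dotProduct, mul_comm]

theorem dotProduct_le_of_mem_stdSimplex {y x : ι → ℝ} {c : ℝ} (hy : y ∈ stdSimplex ℝ ι)
    (hx : x ≤ fun _ => c) : y ⬝ᵥ x ≤ c :=
  calc y ⬝ᵥ x ≤ y ⬝ᵥ fun _ => c := dotProduct_le_dotProduct_of_nonneg_left hx hy.1
    _ = c := by simp [dotProduct, ← Finset.sum_mul, hy.2]

theorem le_dotProduct_of_mem_stdSimplex {y x : ι → ℝ} {c : ℝ} (hy : y ∈ stdSimplex ℝ ι)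
    (hx : (fun _ => c) ≤ x) : c ≤ y ⬝ᵥ x :=
  calc c = y ⬝ᵥ fun _ => c := by simp [dotProduct, ← Finset.sum_mul, hy.2]
    _ ≤ y ⬝ᵥ x := dotProduct_le_dotProduct_of_nonneg_left hx hy.1

theorem exists_mem_stdSimplex_forall_lt_dotProduct {K : Set (ι → ℝ)} (hKconv : Convex ℝ K)
    (hKcomp : IsCompact K) (hKne : K.Nonempty) {c : ℝ}
    (hdisj : Disjoint (Set.Iic fun _ => c) K) :
    ∃ y ∈ stdSimplex ℝ ι, ∀ x ∈ K, c < y ⬝ᵥ x := by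
  classical
  obtain ⟨f, u, v, hfL, huv, hfK⟩ :=
    geometric_hahn_banach_closed_compact (convex_Iic _) isClosed_Iic hKconv hKcomp hdisj
  set p : ι → ℝ := fun i => f (Pi.single i 1)
  have hf : ∀ x, f x = p ⬝ᵥ x := (f : (ι → ℝ) →ₗ[ℝ] ℝ).apply_eq_dotProduct_single_one
  have hp : 0 ≤ p := fun i => (f : (ι → ℝ) →ₗ[ℝ] ℝ).apply_single_one_nonneg_of_bddAbove_image_Iic
    ⟨u, Set.forall_mem_image.2 fun x hx => (hfL x hx).le⟩ i
  have hfc : f (fun _ => c) = c * ∑ i, p i := by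
    simp [hf, dotProduct, Finset.mul_sum, mul_comm]
  obtain ⟨x₀, hx₀⟩ := hKne
  have hsum : 0 < ∑ i, p i := by
    refine (Finset.sum_nonneg fun i _ => hp i).lt_of_ne fun hzero => ?_
    have hp0 : p = 0 := funext fun i =>
      (Finset.sum_eq_zero_iff_of_nonneg fun i _ => hp i).1 hzero.symm i (mem_univ i)
    have h₁ := hfL _ (Set.mem_Iic.2 le_rfl)
    have h₂ := hfK x₀ hx₀
    simp only [hf, hp0, zero_dotProduct] at h₁ h₂
    linarith
  refine ⟨(∑ i, p i)⁻¹ • p, ⟨fun i => smul_nonneg (inv_nonneg.2 hsum.le) (hp i), ?_⟩, ?_⟩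
  · simp [← Finset.mul_sum, hsum.ne']
  · intro x hx
    rw [smul_dotProduct, ← hf, smul_eq_mul, lt_inv_mul_iff₀ hsum, mul_comm]
    linarith [hfL _ (Set.mem_Iic.2 le_rfl), hfK x hx]

namespace Matrix

variable [Nonempty κ] (B : Matrix ι κ ℝ)

theorem exists_mulVec_le_or_exists_lt_vecMul (c : ℝ) :
    (∃ z ∈ stdSimplex ℝ κ, B *ᵥ z ≤ fun _ => c) ∨ ∃ y ∈ stdSimplex ℝ ι, ∀ j, c < (y ᵥ* B) j := by
  classical
  refine or_iff_not_imp_left.2 fun hnone => ?_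
  have hdisj : Disjoint (Set.Iic fun _ => c) (B.mulVecLin '' stdSimplex ℝ κ) := by
    refine Set.disjoint_right.2 ?_
    rintro _ ⟨z, hz, rfl⟩ hle
    exact hnone ⟨z, hz, hle⟩
  obtain ⟨y, hy, hlt⟩ := exists_mem_stdSimplex_forall_lt_dotProduct
    ((convex_stdSimplex ℝ κ).linear_image _)
    ((isCompact_stdSimplex ℝ κ).image B.mulVecLin.continuous_of_finiteDimensional)
    ((Set.nonempty_coe_sort.1 inferInstance).image _) hdisj
  refine ⟨y, hy, fun j => ?_⟩
  have := hlt _ ⟨Pi.single j 1, single_mem_stdSimplex ℝ j, rfl⟩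
  rwa [mulVecLin_apply, dotProduct_mulVec, dotProduct_single_one] at this

noncomputable def securityLevel (y : ι → ℝ) : ℝ :=
  univ.inf' univ_nonempty (y ᵥ* B)

theorem securityLevel_le_vecMul (y : ι → ℝ) : (fun _ => B.securityLevel y) ≤ y ᵥ* B :=
  fun j => inf'_le _ (mem_univ j)

theorem lt_securityLevel_iff {y : ι → ℝ} {c : ℝ} :
    c < B.securityLevel y ↔ ∀ j, c < (y ᵥ* B) j := by
  simp [securityLevel, lt_inf'_iff]

theorem continuous_securityLevel : Continuous B.securityLevel :=
  Continuous.finset_inf'_apply _ fun j _ =>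
    (continuous_apply j).comp (continuous_id.matrix_vecMul continuous_const)

theorem exists_mulVec_le_securityLevel_of_isMaxOn {y : ι → ℝ}
    (hy : IsMaxOn B.securityLevel (stdSimplex ℝ ι) y) :
    ∃ z ∈ stdSimplex ℝ κ, B *ᵥ z ≤ fun _ => B.securityLevel y := by
  refine (B.exists_mulVec_le_or_exists_lt_vecMul _).resolve_right ?_
  rintro ⟨y', hy', hlt⟩
  exact (hy hy').not_gt ((B.lt_securityLevel_iff).2 hlt)

end Matrix

end

theorem expectedPayoff_eq_dotProduct_mulVec {m n : ℕ} (B : Matrix (Fin m) (Fin n) ℝ)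
    (y : Fin m → ℝ) (z : Fin n → ℝ) : expectedPayoff B y z = y ⬝ᵥ (B *ᵥ z) := by
  simp [expectedPayoff, dotProduct, mulVec, Finset.mul_sum, mul_assoc]

/-- **Existence of a saddle point in mixed strategies.** For every `m × n`
real matrix `B` there exist mixed strategies `y* ∈ Δ_m` and `z* ∈ Δ_n` such
that for all `y ∈ Δ_m` and `z ∈ Δ_n`,
`payoff y z* ≤ payoff y* z* ≤ payoff y* z`. -/
theorem matrix_game_exists_saddle_point (m n : ℕ) (hm : 0 < m) (hn : 0 < n)
    (B : Matrix (Fin m) (Fin n) ℝ) :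
    ∃ ystar ∈ stdSimplex ℝ (Fin m), ∃ zstar ∈ stdSimplex ℝ (Fin n),
      ∀ y ∈ stdSimplex ℝ (Fin m), ∀ z ∈ stdSimplex ℝ (Fin n),
        expectedPayoff B y zstar ≤ expectedPayoff B ystar zstar ∧
        expectedPayoff B ystar zstar ≤ expectedPayoff B ystar z := by
  have : Nonempty (Fin m) := Fin.pos_iff_nonempty.1 hm
  have : Nonempty (Fin n) := Fin.pos_iff_nonempty.1 hn
  obtain ⟨ystar, hystar, hmax⟩ := (isCompact_stdSimplex ℝ (Fin m)).exists_isMaxOn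
    (Set.nonempty_coe_sort.1 inferInstance) B.continuous_securityLevel.continuousOn
  obtain ⟨zstar, hzstar, hzle⟩ := B.exists_mulVec_le_securityLevel_of_isMaxOn hmax
  have hupper : ∀ y ∈ stdSimplex ℝ (Fin m), expectedPayoff B y zstar ≤ B.securityLevel ystar :=
    fun y hy => by
      rw [expectedPayoff_eq_dotProduct_mulVec]
      exact dotProduct_le_of_mem_stdSimplex hy hzle
  have hlower : ∀ z ∈ stdSimplex ℝ (Fin n), B.securityLevel ystar ≤ expectedPayoff B ystar z :=
    fun z hz => by
      rw [expectedPayoff_eq_dotProduct_mulVec, dotProduct_mulVec, dotProduct_comm]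
      exact le_dotProduct_of_mem_stdSimplex hz (B.securityLevel_le_vecMul ystar)
  exact ⟨ystar, hystar, zstar, hzstar, fun y hy z hz =>
    ⟨(hupper y hy).trans (hlower zstar hzstar), (hupper ystar hystar).trans (hlower z hz)⟩⟩
end

section
/- (Existence and uniqueness of the value vector of a stopping zero-sum stochastic game.) Let the game have p game elements, stage payoff matrices a^k of size m_k × n_k, and transition probabilities q^{kl}_{ij} ≥ 0 satisfying Σ_{l=1}^p q^{kl}_{ij} ≤ β for all k, i, j, where 0 ≤ β < 1. Then there exists exactly one vector v = (v_1,…,v_p) ∈ ℝ^p satisfying v_k = val(B_k(v)) for every k = 1,…,p, where B_k(v) is the m_k × n_k matrix with entries b^k_{ij} = a^k_{ij} + Σ_{l=1}^p q^{kl}_{ij} v_l. -/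
/-!
The value of a matrix game is nonexpansive for the sup norm on entries: moving every entry by at
most `c` moves every `inf` over the opponent's mixed strategies, and then the `sup`, by at most
`c`. Since `B_k(v) - B_k(w)` has entries `∑ₗ q^{kl}_{ij} (v_l - w_l)`, of size at most
`β ‖v - w‖_∞`, the Shapley operator `v ↦ (val B_k(v))_k` is a contraction of `(ℝ^p, ‖·‖_∞)` with
constant `max β 0 < 1`, and the value vector is its unique fixed point by Banach's theorem.
-/

open scoped BigOperators

/-- The value (in mixed strategies) of the zero-sum matrix game `B`:
`val(B) = sup_{y ∈ Δ_m} inf_{z ∈ Δ_n} ∑_{i,j} y_i B_{ij} z_j`. -/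
noncomputable def matrixGameValue {m n : ℕ} (B : Matrix (Fin m) (Fin n) ℝ) : ℝ :=
  ⨆ y : stdSimplex ℝ (Fin m), ⨅ z : stdSimplex ℝ (Fin n), expectedPayoff B y z

/-- The auxiliary matrix `B_k(v)` of a stochastic game, with entries
`b^k_{ij} = a^k_{ij} + ∑_l q^{kl}_{ij} v_l`. -/
noncomputable def gameElementMatrix {p : ℕ} {m n : Fin p → ℕ}
    (a : ∀ k, Matrix (Fin (m k)) (Fin (n k)) ℝ)
    (q : ∀ k, Fin (m k) → Fin (n k) → Fin p → ℝ)
    (v : Fin p → ℝ) (k : Fin p) : Matrix (Fin (m k)) (Fin (n k)) ℝ :=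
  fun i j => a k i j + ∑ l, q k i j l * v l

open Set Finset

namespace Real

-- `0 ≤ c` is what makes these hold for an empty index type, where `⨆` and `⨅` are `0` in `ℝ`.
variable {ι : Sort*} {f g : ι → ℝ} {c : ℝ}

lemma iSup_le_iSup_add (hc : 0 ≤ c) (hg : BddAbove (range g)) (h : ∀ i, f i ≤ g i + c) :
    ⨆ i, f i ≤ (⨆ i, g i) + c := by
  rcases isEmpty_or_nonempty ι with _ | _
  · simpa using hc
  · exact ciSup_le fun i => (h i).trans (add_le_add_left (le_ciSup hg i) c)

lemma iInf_le_iInf_add (hc : 0 ≤ c) (hf : BddBelow (range f)) (h : ∀ i, f i ≤ g i + c) :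
    ⨅ i, f i ≤ (⨅ i, g i) + c := by
  rcases isEmpty_or_nonempty ι with _ | _
  · simpa using hc
  · exact sub_le_iff_le_add.1 <| le_ciInf fun i => sub_le_iff_le_add.2 <| (ciInf_le hf i).trans (h i)

end Real

section MatrixGame

variable {m n : ℕ}

lemma expectedPayoff_sub (B B' : Matrix (Fin m) (Fin n) ℝ) (y : Fin m → ℝ) (z : Fin n → ℝ) :
    expectedPayoff (B - B') y z = expectedPayoff B y z - expectedPayoff B' y z := by
  simp only [expectedPayoff, Matrix.sub_apply, mul_sub, sub_mul, sum_sub_distrib]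

lemma abs_expectedPayoff_le {B : Matrix (Fin m) (Fin n) ℝ} {c : ℝ} (hB : ∀ i j, |B i j| ≤ c)
    (y : stdSimplex ℝ (Fin m)) (z : stdSimplex ℝ (Fin n)) :
    |expectedPayoff B y z| ≤ c := by
  calc |expectedPayoff B y z| ≤ ∑ i, ∑ j, y i * |B i j| * z j := by
        refine (abs_sum_le_sum_abs _ _).trans (sum_le_sum fun i _ => ?_)
        refine (abs_sum_le_sum_abs _ _).trans_eq (sum_congr rfl fun j _ => ?_)
        rw [abs_mul, abs_mul, abs_of_nonneg (stdSimplex.zero_le y i),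
          abs_of_nonneg (stdSimplex.zero_le z j)]
    _ ≤ ∑ i, ∑ j, y i * c * z j := by
        gcongr with i _ j _
        exacts [stdSimplex.zero_le z j, stdSimplex.zero_le y i, hB i j]
    _ = c := by simp only [← mul_sum, ← sum_mul, stdSimplex.sum_eq_one, mul_one, one_mul]

lemma abs_expectedPayoff_le_sum_abs (B : Matrix (Fin m) (Fin n) ℝ)
    (y : stdSimplex ℝ (Fin m)) (z : stdSimplex ℝ (Fin n)) :
    |expectedPayoff B y z| ≤ ∑ i, ∑ j, |B i j| := by
  refine abs_expectedPayoff_le (fun i j => ?_) y z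
  calc |B i j| ≤ ∑ j', |B i j'| :=
        single_le_sum (f := fun j' => |B i j'|) (fun _ _ => abs_nonneg _) (mem_univ j)
    _ ≤ ∑ i', ∑ j', |B i' j'| :=
        single_le_sum (f := fun i' => ∑ j', |B i' j'|) (fun _ _ => by positivity) (mem_univ i)

lemma bddBelow_range_expectedPayoff (B : Matrix (Fin m) (Fin n) ℝ) (y : stdSimplex ℝ (Fin m)) :
    BddBelow (range fun z : stdSimplex ℝ (Fin n) => expectedPayoff B y z) :=
  ⟨-∑ i, ∑ j, |B i j|, forall_mem_range.2 fun z =>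
    neg_le_of_abs_le (abs_expectedPayoff_le_sum_abs B y z)⟩

lemma bddAbove_range_iInf_expectedPayoff (B : Matrix (Fin m) (Fin n) ℝ) :
    BddAbove (range fun y : stdSimplex ℝ (Fin m) =>
      ⨅ z : stdSimplex ℝ (Fin n), expectedPayoff B y z) := by
  refine ⟨∑ i, ∑ j, |B i j|, forall_mem_range.2 fun y => ?_⟩
  rcases isEmpty_or_nonempty (stdSimplex ℝ (Fin n)) with _ | ⟨⟨z⟩⟩
  · simp only [Real.iInf_of_isEmpty]
    positivity
  · exact ciInf_le_of_le (bddBelow_range_expectedPayoff B y) z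
      (le_of_abs_le (abs_expectedPayoff_le_sum_abs B y z))

lemma matrixGameValue_le_add {B B' : Matrix (Fin m) (Fin n) ℝ} {c : ℝ} (hc : 0 ≤ c)
    (h : ∀ i j, |B i j - B' i j| ≤ c) :
    matrixGameValue B ≤ matrixGameValue B' + c := by
  refine Real.iSup_le_iSup_add hc (bddAbove_range_iInf_expectedPayoff B') fun y =>
    Real.iInf_le_iInf_add hc (bddBelow_range_expectedPayoff B y) fun z => ?_
  have hdiff := abs_expectedPayoff_le (B := B - B') h y z
  rw [expectedPayoff_sub] at hdiff
  linarith [le_of_abs_le hdiff]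

lemma abs_matrixGameValue_sub_le {B B' : Matrix (Fin m) (Fin n) ℝ} {c : ℝ} (hc : 0 ≤ c)
    (h : ∀ i j, |B i j - B' i j| ≤ c) :
    |matrixGameValue B - matrixGameValue B'| ≤ c := by
  have h₁ := matrixGameValue_le_add hc h
  have h₂ := matrixGameValue_le_add hc fun i j => (abs_sub_comm (B' i j) (B i j)).trans_le (h i j)
  exact abs_sub_le_iff.2 ⟨by linarith, by linarith⟩

end MatrixGame

section StochasticGame

variable {p : ℕ} {m n : Fin p → ℕ}

noncomputable def shapleyOperator (a : ∀ k, Matrix (Fin (m k)) (Fin (n k)) ℝ)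
    (q : ∀ k, Fin (m k) → Fin (n k) → Fin p → ℝ) (v : Fin p → ℝ) : Fin p → ℝ :=
  fun k => matrixGameValue (gameElementMatrix a q v k)

variable {q : ∀ k, Fin (m k) → Fin (n k) → Fin p → ℝ} {K : NNReal}

lemma abs_gameElementMatrix_sub_le (a : ∀ k, Matrix (Fin (m k)) (Fin (n k)) ℝ)
    (hq : ∀ k i j l, 0 ≤ q k i j l) (hK : ∀ k i j, ∑ l, q k i j l ≤ K)
    (v w : Fin p → ℝ) (k : Fin p) (i : Fin (m k)) (j : Fin (n k)) :
    |gameElementMatrix a q v k i j - gameElementMatrix a q w k i j| ≤ K * dist v w := by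
  simp only [gameElementMatrix, add_sub_add_left_eq_sub, ← sum_sub_distrib, ← mul_sub]
  calc |∑ l, q k i j l * (v l - w l)| ≤ ∑ l, q k i j l * dist v w := by
        refine (abs_sum_le_sum_abs _ _).trans (sum_le_sum fun l _ => ?_)
        rw [abs_mul, abs_of_nonneg (hq k i j l), ← Real.dist_eq]
        exact mul_le_mul_of_nonneg_left (dist_le_pi_dist v w l) (hq k i j l)
    _ = (∑ l, q k i j l) * dist v w := (sum_mul _ _ _).symm
    _ ≤ K * dist v w := mul_le_mul_of_nonneg_right (hK k i j) dist_nonneg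

lemma lipschitzWith_shapleyOperator (a : ∀ k, Matrix (Fin (m k)) (Fin (n k)) ℝ)
    (hq : ∀ k i j l, 0 ≤ q k i j l) (hK : ∀ k i j, ∑ l, q k i j l ≤ K) :
    LipschitzWith K (shapleyOperator a q) :=
  LipschitzWith.of_dist_le_mul fun v w =>
    (dist_pi_le_iff (by positivity)).2 fun k =>
      (Real.dist_eq _ _).trans_le <|
        abs_matrixGameValue_sub_le (by positivity) (abs_gameElementMatrix_sub_le a hq hK v w k)

end StochasticGame

theorem stochastic_game_value_vector_exists_unique_general
    (p : ℕ) (m n : Fin p → ℕ)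
    (a : ∀ k, Matrix (Fin (m k)) (Fin (n k)) ℝ)
    (q : ∀ k, Fin (m k) → Fin (n k) → Fin p → ℝ)
    (hq : ∀ k i j l, 0 ≤ q k i j l)
    (β : ℝ) (hβ1 : β < 1)
    (hqβ : ∀ k i j, ∑ l, q k i j l ≤ β) :
    ∃! v : Fin p → ℝ, ∀ k, v k = matrixGameValue (gameElementMatrix a q v k) := by
  have hT : ContractingWith β.toNNReal (shapleyOperator a q) :=
    ⟨Real.toNNReal_lt_one.2 hβ1,
      lipschitzWith_shapleyOperator a hq fun k i j => (hqβ k i j).trans (Real.le_coe_toNNReal β)⟩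
  exact ⟨hT.fixedPoint, fun k => (congrFun hT.fixedPoint_isFixedPt k).symm,
    fun v hv => hT.fixedPoint_unique (funext fun k => (hv k).symm)⟩

/-- **Existence and uniqueness of the value vector of a stopping zero-sum
stochastic game:** there is exactly one `v ∈ ℝ^p` with `v_k = val(B_k(v))`
for every game element `k`. -/
theorem stochastic_game_value_vector_exists_unique
    (p : ℕ) (hp : 0 < p) (m n : Fin p → ℕ)
    (hm : ∀ k, 0 < m k) (hn : ∀ k, 0 < n k)
    (a : ∀ k, Matrix (Fin (m k)) (Fin (n k)) ℝ)
    (q : ∀ k, Fin (m k) → Fin (n k) → Fin p → ℝ)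
    (hq : ∀ k i j l, 0 ≤ q k i j l)
    (β : ℝ) (hβ0 : 0 ≤ β) (hβ1 : β < 1)
    (hqβ : ∀ k i j, ∑ l, q k i j l ≤ β) :
    ∃! v : Fin p → ℝ, ∀ k, v k = matrixGameValue (gameElementMatrix a q v k) :=
  stochastic_game_value_vector_exists_unique_general p m n a q hq β hβ1 hqβ
end
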